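/- arXiv:0708.1929 — 3 statements merged into one kernel-verified Lean document; each statement's English description precedes it below -/
import Mathlib

section
/- Let Z be a real random variable with mean 0 and variance σ² ∈ (0,∞), strictly increasing continuous distribution function F, and let λ : (0,1) → ℝ be bounded, strictly increasing, and satisfy λ(s) = −λ(1−s). Then σ²·E[λ(F(Z))²] − (E[Z·λ(F(Z))])² > 0, i.e., the inequality σ²J̃ ≥ K̃² is strict. -/
/-!
Expanding `∫ (t Z - Y)² ≥ 0` gives Cauchy–Schwarz `σ² J̃ ≥ K̃²` for `Y = λ(F(Z))`, and equality forces
`Y = t Z` almost surely with `t = K̃ / σ²`. Since `λ ∘ F` is bounded and injective, this makes `Z`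
almost surely bounded above (if `t ≠ 0`) or almost surely constant (if `t = 0`). Either way `F` would
reach the value `1`, which a strictly increasing function with values in `[0, 1]` cannot do.
-/

open MeasureTheory

section

variable {Ω : Type*} [MeasurableSpace Ω] {μ : Measure Ω}

lemma integral_sq_sub_mul_eq {X Y : Ω → ℝ} (hX : MemLp X 2 μ) (hY : MemLp Y 2 μ) (t : ℝ) :
    ∫ ω, (t * X ω - Y ω) ^ 2 ∂μ
      = t ^ 2 * ∫ ω, X ω ^ 2 ∂μ - 2 * t * ∫ ω, X ω * Y ω ∂μ + ∫ ω, Y ω ^ 2 ∂μ := by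
  have hXX : Integrable (fun ω => t ^ 2 * X ω ^ 2) μ := hX.integrable_sq.const_mul _
  have hXY : Integrable (fun ω => 2 * t * (X ω * Y ω)) μ := (hX.integrable_mul hY).const_mul _
  calc ∫ ω, (t * X ω - Y ω) ^ 2 ∂μ
      = ∫ ω, (t ^ 2 * X ω ^ 2 - 2 * t * (X ω * Y ω)) + Y ω ^ 2 ∂μ := by congr 1; ext ω; ring
    _ = _ := by
      rw [integral_add (by exact hXX.sub hXY) hY.integrable_sq, integral_sub hXX hXY,
        integral_const_mul, integral_const_mul]

/-- Equality case of Cauchy–Schwarz in `L²(μ)`. -/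
lemma ae_eq_mul_of_sq_integral_mul_ge {X Y : Ω → ℝ} (hX : MemLp X 2 μ) (hY : MemLp Y 2 μ)
    (hX0 : 0 < ∫ ω, X ω ^ 2 ∂μ)
    (h : (∫ ω, X ω ^ 2 ∂μ) * ∫ ω, Y ω ^ 2 ∂μ ≤ (∫ ω, X ω * Y ω ∂μ) ^ 2) :
    ∀ᵐ ω ∂μ, Y ω = (∫ ω, X ω * Y ω ∂μ) / (∫ ω, X ω ^ 2 ∂μ) * X ω := by
  set t := (∫ ω, X ω * Y ω ∂μ) / (∫ ω, X ω ^ 2 ∂μ)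
  have hint : Integrable (fun ω => (t * X ω - Y ω) ^ 2) μ :=
    ((hX.const_mul t).sub hY).integrable_sq
  have hzero : ∫ ω, (t * X ω - Y ω) ^ 2 ∂μ = 0 := by
    refine le_antisymm ?_ (integral_nonneg fun ω => sq_nonneg _)
    have ht : t * ∫ ω, X ω ^ 2 ∂μ = ∫ ω, X ω * Y ω ∂μ := div_mul_cancel₀ _ hX0.ne'
    rw [integral_sq_sub_mul_eq hX hY]
    nlinarith
  filter_upwards [(integral_eq_zero_iff_of_nonneg (fun ω => sq_nonneg _) hint).1 hzero] with ω hω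
  have : t * X ω - Y ω = 0 := pow_eq_zero_iff two_ne_zero |>.1 hω
  linarith

lemma not_ae_le_of_strictMono_cdf [IsProbabilityMeasure μ] {Z : Ω → ℝ}
    (hF : StrictMono fun x => μ.real {ω | Z ω ≤ x}) (M : ℝ) : ¬ ∀ᵐ ω ∂μ, Z ω ≤ M := by
  intro hM
  have hone : μ.real {ω | Z ω ≤ M} = 1 := by
    rw [measureReal_def, measure_congr (ae_eq_univ.2 hM), measure_univ, ENNReal.toReal_one]
  have := hF (lt_add_one M)
  linarith [measureReal_le_one (μ := μ) (s := {ω | Z ω ≤ M + 1})]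

lemma exists_ae_le_of_ae_eq_mul [NeZero μ] {Z : Ω → ℝ} {G : ℝ → ℝ} {t C : ℝ}
    (hG : Function.Injective G) (hGC : ∀ x, |G x| ≤ C) (h : ∀ᵐ ω ∂μ, G (Z ω) = t * Z ω) :
    ∃ M, ∀ᵐ ω ∂μ, Z ω ≤ M := by
  rcases eq_or_ne t 0 with rfl | ht
  · obtain ⟨ω₀, hω₀⟩ := h.exists
    refine ⟨Z ω₀, h.mono fun ω hω => (hG ?_).le⟩
    rw [hω, hω₀, zero_mul, zero_mul]
  · refine ⟨C / |t|, h.mono fun ω hω => ?_⟩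
    rw [le_div_iff₀ (abs_pos.2 ht)]
    calc Z ω * |t| ≤ |t * Z ω| := by rw [abs_mul, mul_comm]; gcongr; exact le_abs_self _
      _ = |G (Z ω)| := by rw [hω]
      _ ≤ C := hGC _

lemma mem_Ioo_of_strictMono_of_mem_Icc {F : ℝ → ℝ} (hF : StrictMono F)
    (hF01 : ∀ x, F x ∈ Set.Icc (0 : ℝ) 1) (x : ℝ) : F x ∈ Set.Ioo (0 : ℝ) 1 :=
  ⟨(hF01 (x - 1)).1.trans_lt (hF (sub_one_lt x)), (hF (lt_add_one x)).trans_le (hF01 (x + 1)).2⟩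

end

theorem stmt1_general {Ω : Type*} [MeasurableSpace Ω] (μ : Measure Ω) [IsProbabilityMeasure μ]
    (Z : Ω → ℝ) (σ2 : ℝ) (F lam : ℝ → ℝ)
    (hZmeas : Measurable Z)
    (hZ2 : Integrable (fun ω => (Z ω)^2) μ)
    (hvar : ∫ ω, (Z ω)^2 ∂μ = σ2)
    (hσ2 : 0 < σ2)
    (hF : ∀ x, F x = (μ {ω | Z ω ≤ x}).toReal)
    (hFmono : StrictMono F)
    (hlam_mono : StrictMonoOn lam (Set.Ioo (0:ℝ) 1))
    (hlam_bdd : ∃ C, ∀ s ∈ Set.Ioo (0:ℝ) 1, |lam s| ≤ C) :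
    0 < σ2 * (∫ ω, (lam (F (Z ω)))^2 ∂μ) - (∫ ω, Z ω * lam (F (Z ω)) ∂μ)^2 := by
  obtain ⟨C, hC⟩ := hlam_bdd
  have hF01 := mem_Ioo_of_strictMono_of_mem_Icc hFmono fun x =>
    hF x ▸ ⟨measureReal_nonneg, measureReal_le_one⟩
  have hG : StrictMono (lam ∘ F) := fun x y hxy => hlam_mono (hF01 x) (hF01 y) (hFmono hxy)
  have hZ : MemLp Z 2 μ := (memLp_two_iff_integrable_sq hZmeas.aestronglyMeasurable).2 hZ2
  have hGZ : MemLp (fun ω => lam (F (Z ω))) 2 μ :=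
    .of_bound (hG.monotone.measurable.comp hZmeas).aestronglyMeasurable C
      (.of_forall fun ω => hC _ (hF01 _))
  by_contra! hle
  rw [← hvar] at hσ2 hle
  obtain ⟨M, hM⟩ := exists_ae_le_of_ae_eq_mul hG.injective (fun x => hC _ (hF01 x))
    (ae_eq_mul_of_sq_integral_mul_ge hZ hGZ hσ2 (sub_nonpos.1 hle))
  exact not_ae_le_of_strictMono_cdf (funext hF ▸ hFmono) M hM

theorem stmt1 {Ω : Type*} [MeasurableSpace Ω] (μ : Measure Ω) [IsProbabilityMeasure μ]
    (Z : Ω → ℝ) (σ2 : ℝ) (F lam : ℝ → ℝ)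
    (hZmeas : Measurable Z)
    (hZ2 : Integrable (fun ω => (Z ω)^2) μ)
    (hmean : ∫ ω, Z ω ∂μ = 0)
    (hvar : ∫ ω, (Z ω)^2 ∂μ = σ2)
    (hσ2 : 0 < σ2)
    (hF : ∀ x, F x = (μ {ω | Z ω ≤ x}).toReal)
    (hFmono : StrictMono F) (hFcont : Continuous F)
    (hlam_mono : StrictMonoOn lam (Set.Ioo (0:ℝ) 1))
    (hlam_odd : ∀ s ∈ Set.Ioo (0:ℝ) 1, lam s = -lam (1 - s))
    (hlam_bdd : ∃ C, ∀ s ∈ Set.Ioo (0:ℝ) 1, |lam s| ≤ C) :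
    0 < σ2 * (∫ ω, (lam (F (Z ω)))^2 ∂μ) - (∫ ω, Z ω * lam (F (Z ω)) ∂μ)^2 :=
  stmt1_general μ Z σ2 F lam hZmeas hZ2 hvar hσ2 hF hFmono hlam_mono hlam_bdd
end

section
/- Let Z ~ N(0, σ²) with density f and distribution function F, and let λ : (0,1) → ℝ be continuously differentiable and bounded with bounded derivative. Then σ² ∫₀¹ f(F⁻¹(s)) λ'(s) ds = ∫₀¹ F⁻¹(s) λ(s) ds, i.e., σ²L̃ = K̃. -/
/-!
Substituting `s = F x` turns both integrals over `(0, 1)` into Gaussian expectations: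
the left side becomes `σ² 𝔼[(λ ∘ F)'(Z)]` and the right side `𝔼[Z · (λ ∘ F)(Z)]`.
These agree by Stein's lemma, i.e. integration by parts against the identity `σ² φ' = -x φ`
for the Gaussian density `φ`.
-/

open MeasureTheory Set ProbabilityTheory NNReal

theorem integral_range_eq_integral_deriv_mul_comp {F F' : ℝ → ℝ}
    (hF : ∀ x, HasDerivAt F (F' x) x) (hmono : StrictMono F) (g : ℝ → ℝ) :
    ∫ y in range F, g y = ∫ x, F' x * g (F x) := by
  have h := integral_image_eq_integral_abs_deriv_smul MeasurableSet.univ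
    (fun x _ => (hF x).hasDerivWithinAt) hmono.injective.injOn g
  rw [image_univ] at h
  rw [h, setIntegral_univ]
  congr 1 with x
  rw [smul_eq_mul, abs_of_nonneg ((hF x).nonneg_of_monotone hmono.monotone)]

section CumulativeDistribution

variable {f : ℝ → ℝ}

theorem hasDerivAt_integral_Iic (hfi : Integrable f) (hfc : Continuous f) (x : ℝ) :
    HasDerivAt (fun y => ∫ t in Iic y, f t) (f x) x := by
  have hsplit : (fun y => ∫ t in Iic y, f t) =
      fun y => (∫ t in Iic 0, f t) + ∫ t in 0..y, f t := by
    funext y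
    rw [← intervalIntegral.integral_Iic_sub_Iic hfi.integrableOn hfi.integrableOn]
    ring
  rw [hsplit]
  exact (intervalIntegral.integral_hasDerivAt_right hfi.intervalIntegrable
    hfc.stronglyMeasurable.stronglyMeasurableAtFilter hfc.continuousAt).const_add _

theorem integral_Iic_mem_Ioo (hfi : Integrable f) (hpos : ∀ x, 0 < f x)
    (hone : ∫ x, f x = 1) (x : ℝ) : ∫ t in Iic x, f t ∈ Ioo 0 1 := by
  have hpos_of_infinite {s : Set ℝ} (hs : MeasurableSet s) (hvol : volume s = ⊤) :
      0 < ∫ t in s, f t := by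
    rw [setIntegral_pos_iff_support_of_nonneg_ae (ae_of_all _ fun t => (hpos t).le)
      hfi.integrableOn, Function.support_eq_univ fun t => (hpos t).ne', univ_inter, hvol]
    exact ENNReal.zero_lt_top
  have hIic := hpos_of_infinite (measurableSet_Iic (a := x)) (by simp)
  have hIoi := hpos_of_infinite (measurableSet_Ioi (a := x)) (by simp)
  have hsum := integral_add_compl (measurableSet_Iic (a := x)) hfi
  rw [compl_Iic, hone] at hsum
  constructor <;> linarith

theorem integral_Ioo_comp_quantile (hfi : Integrable f) (hfc : Continuous f)
    (hpos : ∀ x, 0 < f x) (hone : ∫ x, f x = 1) {F Finv : ℝ → ℝ}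
    (hF : ∀ x, F x = ∫ t in Iic x, f t) (hFinv : ∀ s ∈ Ioo 0 1, F (Finv s) = s)
    (h : ℝ → ℝ → ℝ) :
    ∫ s in Ioo 0 1, h (Finv s) s = ∫ x, f x * h x (F x) := by
  have hFd (x : ℝ) : HasDerivAt F (f x) x := funext hF ▸ hasDerivAt_integral_Iic hfi hfc x
  have hFmono : StrictMono F := strictMono_of_hasDerivAt_pos hFd hpos
  have hrange : range F = Ioo 0 1 := by
    refine (range_subset_iff.2 fun x => ?_).antisymm fun s hs => ⟨Finv s, hFinv s hs⟩
    exact hF x ▸ integral_Iic_mem_Ioo hfi hpos hone x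
  have hFinvF (x : ℝ) : Finv (F x) = x := hFmono.injective (hFinv _ (hrange ▸ mem_range_self x))
  simp only [← hrange, integral_range_eq_integral_deriv_mul_comp hFd hFmono, hFinvF]

end CumulativeDistribution

namespace ProbabilityTheory

theorem hasDerivAt_gaussianPDFReal (μ : ℝ) (v : ℝ≥0) (x : ℝ) :
    HasDerivAt (gaussianPDFReal μ v) (-((x - μ) / v) * gaussianPDFReal μ v x) x := by
  have hexp : HasDerivAt (fun y => -(y - μ) ^ 2 / (2 * v)) (-((x - μ) / v)) x := by
    refine ((((hasDerivAt_id x).sub_const μ).pow 2).neg.div_const (2 * (v : ℝ))).congr_deriv ?_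
    rw [neg_div, id, pow_one, mul_one, Nat.cast_ofNat, mul_div_mul_left _ _ two_ne_zero]
  rw [gaussianPDFReal_def]
  exact (hexp.exp.const_mul _).congr_deriv (by ring)

theorem continuous_gaussianPDFReal (μ : ℝ) (v : ℝ≥0) : Continuous (gaussianPDFReal μ v) :=
  continuous_iff_continuousAt.2 fun x => (hasDerivAt_gaussianPDFReal μ v x).continuousAt

theorem gaussianPDFReal_le (μ : ℝ) (v : ℝ≥0) (x : ℝ) :
    gaussianPDFReal μ v x ≤ (√(2 * Real.pi * v))⁻¹ := by
  rw [gaussianPDFReal]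
  refine mul_le_of_le_one_right (by positivity) (Real.exp_le_one_iff.2 ?_)
  exact div_nonpos_of_nonpos_of_nonneg (neg_nonpos.2 (sq_nonneg _)) (by positivity)

theorem integrable_sub_mul_gaussianPDFReal (μ : ℝ) (v : ℝ≥0) :
    Integrable fun x => (x - μ) * gaussianPDFReal μ v x := by
  rcases eq_or_ne v 0 with rfl | hv
  · simp
  have hb : (0 : ℝ) < (2 * (v : ℝ))⁻¹ := by positivity
  refine (((integrable_mul_exp_neg_mul_sq hb).const_mul (√(2 * Real.pi * v))⁻¹).comp_sub_right
    μ).congr (ae_of_all _ fun x => ?_)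
  simp only [gaussianPDFReal]
  ring_nf

/-- Stein's lemma: `𝔼[(Z - μ) g(Z)] = v 𝔼[g'(Z)]` for `Z ~ 𝓝(μ, v)`. -/
theorem integral_sub_mul_mul_gaussianPDFReal {μ : ℝ} {v : ℝ≥0} (hv : v ≠ 0)
    {g g' : ℝ → ℝ} (hg : ∀ x, HasDerivAt g (g' x) x) {C : ℝ} (hgC : ∀ x, |g x| ≤ C)
    (hg' : Integrable fun x => g' x * gaussianPDFReal μ v x) :
    ∫ x, (x - μ) * g x * gaussianPDFReal μ v x = v * ∫ x, g' x * gaussianPDFReal μ v x := by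
  have hφ' (x : ℝ) :
      HasDerivAt (fun x => v * gaussianPDFReal μ v x) (-((x - μ) * gaussianPDFReal μ v x)) x :=
    ((hasDerivAt_gaussianPDFReal μ v x).const_mul (v : ℝ)).congr_deriv (by field_simp)
  have hgm : AEStronglyMeasurable g :=
    (continuous_iff_continuousAt.2 fun x => (hg x).continuousAt).aestronglyMeasurable
  have hgC' : ∀ᵐ x, ‖g x‖ ≤ C := ae_of_all _ hgC
  have hparts := integral_mul_deriv_eq_deriv_mul_of_integrable (fun x _ => hφ' x)
    (fun x _ => hg x)
    ((hg'.const_mul v).congr (ae_of_all _ fun x => by simp only [Pi.mul_apply]; ring))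
    ((integrable_sub_mul_gaussianPDFReal μ v).neg.mul_bdd hgm hgC')
    (((integrable_gaussianPDFReal μ v).const_mul v).mul_bdd hgm hgC')
  calc ∫ x, (x - μ) * g x * gaussianPDFReal μ v x
      = -∫ x, -((x - μ) * gaussianPDFReal μ v x) * g x := by
        rw [← integral_neg]; congr 1 with x; ring
    _ = ∫ x, v * gaussianPDFReal μ v x * g' x := hparts.symm
    _ = v * ∫ x, g' x * gaussianPDFReal μ v x := by
        rw [← integral_const_mul]; congr 1 with x; ring

end ProbabilityTheory

theorem stmt4 (σ : ℝ) (hσ : 0 < σ) (f F Finv lam : ℝ → ℝ)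
    (hf : ∀ x, f x = (Real.sqrt (2 * Real.pi * σ^2))⁻¹ * Real.exp (-(x^2) / (2 * σ^2)))
    (hF : ∀ x, F x = ∫ t in Set.Iic x, f t)
    (hFinv : ∀ s ∈ Set.Ioo (0:ℝ) 1, F (Finv s) = s)
    (hlamC1 : ContDiff ℝ 1 lam)
    (hlam_bdd : ∃ C, ∀ s, |lam s| ≤ C)
    (hlam'_bdd : ∃ C, ∀ s, |deriv lam s| ≤ C) :
    σ^2 * ∫ s in Set.Ioo (0:ℝ) 1, f (Finv s) * deriv lam s
      = ∫ s in Set.Ioo (0:ℝ) 1, Finv s * lam s := by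
  set v : ℝ≥0 := ⟨σ ^ 2, sq_nonneg σ⟩
  have hv : v ≠ 0 := fun h => (pow_pos hσ 2).ne' (congrArg NNReal.toReal h)
  obtain rfl : f = gaussianPDFReal 0 v := funext fun x => by rw [hf, gaussianPDFReal, sub_zero]; rfl
  have hfi := integrable_gaussianPDFReal 0 v
  have hfc := continuous_gaussianPDFReal 0 v
  have hFd (x : ℝ) : HasDerivAt F (gaussianPDFReal 0 v x) x :=
    funext hF ▸ hasDerivAt_integral_Iic hfi hfc x
  have hFc : Continuous F := continuous_iff_continuousAt.2 fun x => (hFd x).continuousAt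
  obtain ⟨C, hC⟩ := hlam_bdd
  obtain ⟨C', hC'⟩ := hlam'_bdd
  have hg'C (x : ℝ) :
      ‖deriv lam (F x) * gaussianPDFReal 0 v x‖ ≤ C' * (√(2 * Real.pi * v))⁻¹ := by
    rw [norm_mul, Real.norm_eq_abs, Real.norm_of_nonneg (gaussianPDFReal_nonneg 0 v x)]
    exact mul_le_mul (hC' _) (gaussianPDFReal_le 0 v x) (gaussianPDFReal_nonneg 0 v x)
      ((abs_nonneg _).trans (hC' 0))
  have hstein := integral_sub_mul_mul_gaussianPDFReal (μ := 0) hv (g := lam ∘ F)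
    (fun x => (hlamC1.differentiable one_ne_zero _).hasDerivAt.comp x (hFd x)) (fun x => hC _)
    (hfi.bdd_mul (((hlamC1.continuous_deriv le_rfl).comp hFc).mul hfc).aestronglyMeasurable
      (ae_of_all _ hg'C))
  have hquantile := integral_Ioo_comp_quantile hfi hfc (gaussianPDFReal_pos 0 v · hv)
    (integral_gaussianPDFReal_eq_one 0 hv) hF hFinv
  rw [hquantile fun y s => gaussianPDFReal 0 v y * deriv lam s, hquantile fun y s => y * lam s]
  simp only [Function.comp_apply, sub_zero] at hstein
  convert hstein.symm using 2 <;> congr 1 with x <;> ring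
end

section
/- Let λ : (0,1) → ℝ be strictly increasing with λ(s) = −λ(1−s) for all s. For real numbers z₁, …, z_N with ranks R₁, …, R_N (assume the z_t are distinct so ranks are well defined), the dispersion D = ∑_{t=1}^N λ(R_t/(N+1)) z_t satisfies D ≥ 0, and D = 0 if and only if z₁ = z₂ = ⋯ = z_N. -/
/-!
Reindexing by ranks turns the dispersion into `∑ᵢ cᵢ wᵢ`, where `cᵢ = λ((i+1)/(N+1))` and
`w = z ∘ R⁻¹` are both strictly increasing, and the oddness of `λ` about `1/2` makes `c`
antisymmetric under `i ↦ N - 1 - i`. Reversing `w` therefore negates the sum, so the rearrangement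
inequality gives `-D ≤ D`, strictly as soon as there are two indices, because `c` and the
reversed `w` are then oppositely ordered. If `z` is constant, reversing `w` changes nothing, so
`D = -D`.
-/

section Antisymmetric

variable {α : Type*} {n : ℕ} {c w : Fin n → α}

theorem sum_mul_comp_rev_eq_neg [Ring α] (hc : ∀ i, c i.rev = -c i) :
    ∑ i, c i * w i.rev = -∑ i, c i * w i := by
  rw [← Equiv.sum_comp Fin.revPerm]
  simp [hc]

variable [Ring α] [LinearOrder α] [IsStrictOrderedRing α]

theorem sum_mul_nonneg_of_rev_eq_neg (hc : ∀ i, c i.rev = -c i) (hcw : Monovary c w) :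
    0 ≤ ∑ i, c i * w i := by
  have h := hcw.sum_mul_comp_perm_le_sum_mul (σ := Fin.revPerm)
  simp only [Fin.revPerm_apply, sum_mul_comp_rev_eq_neg hc] at h
  exact neg_le_self_iff.mp h

theorem sum_mul_pos_of_rev_eq_neg [Nontrivial (Fin n)] (hc : ∀ i, c i.rev = -c i)
    (hc_mono : StrictMono c) (hw : StrictMono w) : 0 < ∑ i, c i * w i := by
  have h := (hc_mono.monotone.monovary hw.monotone).sum_mul_comp_perm_lt_sum_mul_iff
    (σ := Fin.revPerm)
  simp only [Fin.revPerm_apply, sum_mul_comp_rev_eq_neg hc, neg_lt_self_iff] at h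
  refine h.mpr fun hmono => ?_
  obtain ⟨i, j, hij⟩ := exists_pair_lt (Fin n)
  exact (hmono (hw (Fin.rev_lt_rev.mpr hij))).not_gt (hc_mono hij)

end Antisymmetric

section RankScore

variable {N : ℕ}

theorem rank_div_mem_Ioo (i : Fin N) : ((i : ℝ) + 1) / (N + 1) ∈ Set.Ioo (0 : ℝ) 1 := by
  refine ⟨by positivity, (div_lt_one (by positivity)).mpr ?_⟩
  exact_mod_cast Nat.succ_lt_succ i.isLt

theorem rank_div_rev (i : Fin N) :
    ((i.rev : ℝ) + 1) / (N + 1) = 1 - ((i : ℝ) + 1) / (N + 1) := by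
  have hi : (i : ℕ) + 1 ≤ N := i.isLt
  rw [Fin.val_rev, Nat.cast_sub hi]
  field_simp
  push_cast
  ring

/-- Ranks are `0`-based (`Fin N`), so the paper's rank `R` is `i + 1` here. -/
noncomputable def rankScore (lam : ℝ → ℝ) (N : ℕ) (i : Fin N) : ℝ :=
  lam (((i : ℝ) + 1) / (N + 1))

theorem rankScore_strictMono {lam : ℝ → ℝ} (hmono : StrictMonoOn lam (Set.Ioo 0 1)) :
    StrictMono (rankScore lam N) := fun i j hij =>
  hmono (rank_div_mem_Ioo i) (rank_div_mem_Ioo j) <| by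
    gcongr
    exact_mod_cast hij

theorem rankScore_rev {lam : ℝ → ℝ} (hodd : ∀ s ∈ Set.Ioo (0 : ℝ) 1, lam s = -lam (1 - s))
    (i : Fin N) : rankScore lam N i.rev = -rankScore lam N i := by
  rw [rankScore, rankScore, rank_div_rev, hodd _ (rank_div_mem_Ioo i), neg_neg]

end RankScore

theorem stmt11_general (N : ℕ) (lam : ℝ → ℝ)
    (hmono : StrictMonoOn lam (Set.Ioo (0:ℝ) 1))
    (hodd : ∀ s ∈ Set.Ioo (0:ℝ) 1, lam s = -lam (1 - s))
    (z : Fin N → ℝ)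
    (R : Equiv.Perm (Fin N)) (hR : ∀ s t, z s < z t ↔ R s < R t) :
    0 ≤ ∑ t : Fin N, lam ((((R t : ℕ) : ℝ) + 1) / (N + 1)) * z t ∧
    ((∑ t : Fin N, lam ((((R t : ℕ) : ℝ) + 1) / (N + 1)) * z t) = 0 ↔
      ∀ s t, z s = z t) := by
  have hc := rankScore_strictMono (N := N) hmono
  have hc_rev := rankScore_rev (N := N) hodd
  have hw : StrictMono (z ∘ R.symm) := fun i j hij => (hR _ _).mpr (by simpa using hij)
  have hD : ∑ t, lam ((((R t : ℕ) : ℝ) + 1) / (N + 1)) * z t =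
      ∑ i, rankScore lam N i * (z ∘ R.symm) i :=
    (Equiv.sum_comp R.symm _).symm.trans (by simp [rankScore])
  rw [hD]
  refine ⟨sum_mul_nonneg_of_rev_eq_neg hc_rev (hc.monotone.monovary hw.monotone), fun hD0 => ?_,
    fun hconst => ?_⟩
  · by_contra! ⟨s, t, hst⟩
    have : Nontrivial (Fin N) := ⟨s, t, ne_of_apply_ne z hst⟩
    exact (sum_mul_pos_of_rev_eq_neg hc_rev hc hw).ne' hD0
  · have h := sum_mul_comp_rev_eq_neg (w := z ∘ R.symm) hc_rev
    have hw_rev : ∀ i, (z ∘ R.symm) i.rev = (z ∘ R.symm) i := fun i => hconst _ _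
    simp only [hw_rev] at h
    linarith

theorem stmt11 (N : ℕ) (lam : ℝ → ℝ)
    (hmono : StrictMonoOn lam (Set.Ioo (0:ℝ) 1))
    (hodd : ∀ s ∈ Set.Ioo (0:ℝ) 1, lam s = -lam (1 - s))
    (z : Fin N → ℝ) (hz : Function.Injective z)
    (R : Equiv.Perm (Fin N)) (hR : ∀ s t, z s < z t ↔ R s < R t) :
    0 ≤ ∑ t : Fin N, lam ((((R t : ℕ) : ℝ) + 1) / (N + 1)) * z t ∧
    ((∑ t : Fin N, lam ((((R t : ℕ) : ℝ) + 1) / (N + 1)) * z t) = 0 ↔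
      ∀ s t, z s = z t) :=
  stmt11_general N lam hmono hodd z R hR
end
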